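/- For every real number d with 0 ≤ d ≤ √3/2, the probability that the distance between a uniform point in T₁ and an independent uniform point in T₂ is at most d equals 2·(1/3 − π/(9√3))·d⁴. -/

import Mathlib

open MeasureTheory Real

noncomputable def pt (x y : ℝ) : EuclideanSpace ℝ (Fin 2) := WithLp.toLp 2 ![x, y]

/-- Uniform probability measure on a planar region `S` of area `area`. -/
noncomputable def unifOn (S : Set (EuclideanSpace ℝ (Fin 2))) (area : ℝ) :
    Measure (EuclideanSpace ℝ (Fin 2)) :=
  (ENNReal.ofReal area)⁻¹ • MeasureTheory.volume.restrict S

/-- The unit equilateral triangle with vertices (0,0), (1,0), (1/2, √3/2). -/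
noncomputable def T1 : Set (EuclideanSpace ℝ (Fin 2)) :=
  convexHull ℝ {pt 0 0, pt 1 0, pt (1/2) (Real.sqrt 3 / 2)}

/-- The diagonal unit equilateral triangle with vertices (0,0), (-1,0), (-1/2, -√3/2),
the image of `T1` under point reflection through the origin. -/
noncomputable def T2 : Set (EuclideanSpace ℝ (Fin 2)) :=
  convexHull ℝ {pt 0 0, pt (-1) 0, pt (-(1/2)) (-(Real.sqrt 3 / 2))}

/-!
Both triangles sit in opposite cones at the origin: `T1` in the sector `S` of aperture `π/3`
bounded by the rays of slope `0` and `√3`, and `T2 = -T1` in `-S`. For `x ∈ S` and `y ∈ -S` the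
coordinates of `x` and `-y` are nonnegative, so `|x|, |y| ≤ |x - y|`; as the side of `T1` opposite
the origin is at distance `√3/2`, for `d ≤ √3/2` the event `|x - y| ≤ d` inside `T1 × T2` is the
event `|x + u| ≤ d` for `(x, u) ∈ S × S` (with `u = -y`). Fibring over `z = x + u`, the fibre
`S ∩ (z - S)` is a parallelogram of area `z₂ (√3 z₁ - z₂) / √3`, a function homogeneous of degree
`2`, so in polar coordinates the volume is `d⁴/4 · ∫₀^{π/3} sin θ (√3 cos θ - sin θ) / √3 dθ
= d⁴/4 · (1/2 - π/(6√3))`. Dividing by the squared area `3/16` gives the formula.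
-/

theorem unifOn_prod_unifOn_apply (S T : Set (EuclideanSpace ℝ (Fin 2))) (a b : ℝ)
    {E : Set (EuclideanSpace ℝ (Fin 2) × EuclideanSpace ℝ (Fin 2))} (hE : MeasurableSet E) :
    (unifOn S a).prod (unifOn T b) E
      = (ENNReal.ofReal a)⁻¹ * (ENNReal.ofReal b)⁻¹ * volume (E ∩ S ×ˢ T) := by
  rw [unifOn, unifOn, Measure.prod_smul_left, Measure.prod_smul_right, Measure.prod_restrict,
    ← Measure.volume_eq_prod, Measure.smul_apply, Measure.smul_apply,
    Measure.restrict_apply hE, smul_eq_mul, smul_eq_mul, mul_assoc]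

theorem smul_add_smul_mem_convexHull_zero_pair {𝕜 E : Type*} [Field 𝕜] [LinearOrder 𝕜]
    [IsStrictOrderedRing 𝕜] [AddCommGroup E] [Module 𝕜 E] {p q : E} {a b : 𝕜}
    (ha : 0 ≤ a) (hb : 0 ≤ b) (hab : a + b ≤ 1) : a • p + b • q ∈ convexHull 𝕜 {0, p, q} := by
  have := (convex_convexHull 𝕜 {0, p, q}).sum_mem (t := Finset.univ) (w := ![1 - a - b, a, b])
    (z := ![0, p, q]) ?_ ?_ ?_
  · simpa [Fin.sum_univ_three] using this
  · intro i _; fin_cases i <;> simp <;> linarith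
  · simp [Fin.sum_univ_three]; ring
  · intro i _; fin_cases i <;> apply subset_convexHull <;> simp

theorem MeasureTheory.Measure.prod_setOf_add_mem {G : Type*} [AddGroup G] [MeasurableSpace G]
    [MeasurableAdd₂ G] [MeasurableNeg G] (μ ν : Measure G) [SFinite μ] [SFinite ν]
    [μ.IsAddRightInvariant] {A B D : Set G} (hA : MeasurableSet A) (hB : MeasurableSet B)
    (hD : MeasurableSet D) :
    μ.prod ν {p | p.1 ∈ A ∧ p.2 ∈ B ∧ p.1 + p.2 ∈ D}
      = ∫⁻ z in D, ν {y | z - y ∈ A ∧ y ∈ B} ∂μ := by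
  have hK : MeasurableSet {q : G × G | q.1 - q.2 ∈ A ∧ q.2 ∈ B ∧ q.1 ∈ D} :=
    (hA.preimage (measurable_fst.sub measurable_snd)).inter
      ((hB.preimage measurable_snd).inter (hD.preimage measurable_fst))
  have hpre : {p : G × G | p.1 ∈ A ∧ p.2 ∈ B ∧ p.1 + p.2 ∈ D}
      = (fun p => (p.1 + p.2, p.2)) ⁻¹' {q | q.1 - q.2 ∈ A ∧ q.2 ∈ B ∧ q.1 ∈ D} := by
    ext p; simp
  rw [hpre, (measurePreserving_add_prod μ ν).measure_preimage hK.nullMeasurableSet,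
    Measure.prod_apply hK, ← lintegral_indicator hD]
  congr 1 with z
  by_cases hz : z ∈ D <;> simp [hz, Set.preimage]

noncomputable def toProd : EuclideanSpace ℝ (Fin 2) ≃ᵐ ℝ × ℝ :=
  (MeasurableEquiv.toLp 2 (Fin 2 → ℝ)).symm.trans MeasurableEquiv.finTwoArrow

@[simp] theorem toProd_apply (x : EuclideanSpace ℝ (Fin 2)) : toProd x = (x 0, x 1) := rfl

theorem toProd_neg (x : EuclideanSpace ℝ (Fin 2)) : toProd (-x) = -toProd x := rfl

theorem isLinearMap_toProd : IsLinearMap ℝ toProd := ⟨fun _ _ => rfl, fun _ _ => rfl⟩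

theorem measurePreserving_toProd : MeasurePreserving toProd :=
  (volume_preserving_finTwoArrow ℝ).comp
    (EuclideanSpace.volume_preserving_symm_measurableEquiv_toLp (Fin 2))

def sector (k : ℝ) : Set (ℝ × ℝ) := {z | 0 ≤ z.2 ∧ z.2 ≤ k * z.1}

-- not `Metric.closedBall`, which is a square for the sup norm of `ℝ × ℝ`
def disc (r : ℝ) : Set (ℝ × ℝ) := {z | z.1 ^ 2 + z.2 ^ 2 ≤ r ^ 2}

theorem convex_sector (k : ℝ) : Convex ℝ (sector k) := by
  rintro x ⟨hx1, hx2⟩ y ⟨hy1, hy2⟩ a b ha hb -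
  simp only [sector, Set.mem_ofPred_eq, Prod.fst_add, Prod.snd_add, Prod.smul_fst, Prod.smul_snd,
    smul_eq_mul]
  constructor <;> nlinarith [mul_le_mul_of_nonneg_left hx2 ha, mul_le_mul_of_nonneg_left hy2 hb]

theorem measurableSet_sector (k : ℝ) : MeasurableSet (sector k) :=
  (measurableSet_le measurable_const measurable_snd).inter
    (measurableSet_le measurable_snd (measurable_fst.const_mul k))

theorem measurableSet_disc (r : ℝ) : MeasurableSet (disc r) :=
  measurableSet_le (by fun_prop) measurable_const

theorem dist_le_iff_toProd_sub_mem_disc {d : ℝ} (hd : 0 ≤ d) (x y : EuclideanSpace ℝ (Fin 2)) :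
    dist x y ≤ d ↔ toProd x - toProd y ∈ disc d := by
  rw [EuclideanSpace.dist_eq, Real.sqrt_le_left hd]
  simp [disc, Fin.sum_univ_two, Real.dist_eq, sq_abs]

theorem fst_nonneg_of_mem_sector {k : ℝ} (hk : 0 < k) {z : ℝ × ℝ} (hz : z ∈ sector k) :
    0 ≤ z.1 :=
  nonneg_of_mul_nonneg_right (hz.1.trans hz.2) hk

theorem mem_disc_of_add_mem_disc {k r : ℝ} (hk : 0 < k) {x u : ℝ × ℝ} (hx : x ∈ sector k)
    (hu : u ∈ sector k) (h : x + u ∈ disc r) : x ∈ disc r := by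
  have := fst_nonneg_of_mem_sector hk hx
  have := fst_nonneg_of_mem_sector hk hu
  simp only [disc, Set.mem_ofPred_eq, Prod.fst_add, Prod.snd_add] at h ⊢
  nlinarith [hx.1, hu.1]

theorem disc_mono {r s : ℝ} (hr : 0 ≤ r) (h : r ≤ s) : disc r ⊆ disc s :=
  fun _ hz => hz.trans (pow_le_pow_left₀ hr h 2)

@[simp] theorem pt_apply_zero (x y : ℝ) : pt x y 0 = x := rfl

@[simp] theorem pt_apply_one (x y : ℝ) : pt x y 1 = y := rfl

theorem pt_zero_zero : pt 0 0 = 0 := by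
  ext i; fin_cases i <;> rfl

theorem neg_pt (x y : ℝ) : -pt x y = pt (-x) (-y) := by
  ext i; fin_cases i <;> rfl

theorem T2_eq_neg_T1 : T2 = -T1 := by
  rw [T1, T2, ← convexHull_neg, Set.neg_insert, Set.neg_insert, Set.neg_singleton, neg_pt, neg_pt,
    neg_pt, neg_zero]

theorem T1_subset_sector : T1 ⊆ toProd ⁻¹' sector √3 := by
  refine convexHull_min ?_ ((convex_sector _).is_linear_preimage isLinearMap_toProd)
  rintro x (rfl | rfl | rfl)
  · simp [sector]
  · simp [sector]
  · exact ⟨by simp; positivity, le_of_eq (by simp; ring)⟩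

theorem mem_T1_of_mem_sector_of_mem_disc {x : EuclideanSpace ℝ (Fin 2)}
    (hx : toProd x ∈ sector √3) (hnorm : toProd x ∈ disc (√3 / 2)) : x ∈ T1 := by
  have hs : 0 < √3 := by positivity
  have hs2 : √3 ^ 2 = 3 := Real.sq_sqrt (by norm_num)
  obtain ⟨h1, h2⟩ := hx
  simp only [disc, toProd_apply, Set.mem_ofPred_eq] at h1 h2 hnorm
  -- the disc of radius √3/2 lies below the side √3 x + y = √3, at distance √3/2 from 0
  have hside : √3 * x 0 + x 1 ≤ √3 := by
    nlinarith [sq_nonneg (x 0 - √3 * x 1), sq_nonneg (√3 * x 0 + x 1 - √3)]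
  have hx : x = (x 0 - x 1 / √3) • pt 1 0 + (2 * x 1 / √3) • pt (1 / 2) (√3 / 2) := by
    ext i; fin_cases i <;> simp <;> field_simp; ring
  have hmem := smul_add_smul_mem_convexHull_zero_pair (p := pt 1 0) (q := pt (1 / 2) (√3 / 2))
    (a := x 0 - x 1 / √3) (b := 2 * x 1 / √3) ?_ ?_ ?_
  · rwa [← hx, ← pt_zero_zero] at hmem
  · rw [sub_nonneg, div_le_iff₀ hs]; linarith
  · positivity
  · rw [← sub_nonneg]
    have : 1 - ((x 0 - x 1 / √3) + 2 * x 1 / √3) = (√3 - (√3 * x 0 + x 1)) / √3 := by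
      field_simp; ring_nf
    rw [this]; exact div_nonneg (by linarith) hs.le

theorem inter_T1_prod_T2_eq_preimage {d : ℝ} (h0 : 0 ≤ d) (h1 : d ≤ √3 / 2) :
    {p : EuclideanSpace ℝ (Fin 2) × EuclideanSpace ℝ (Fin 2) | dist p.1 p.2 ≤ d} ∩ T1 ×ˢ T2
      = Prod.map toProd (toProd ∘ Neg.neg) ⁻¹'
          {q | q.1 ∈ sector √3 ∧ q.2 ∈ sector √3 ∧ q.1 + q.2 ∈ disc d} := by
  have hs : 0 < √3 := by positivity
  ext ⟨x, y⟩
  simp only [Set.mem_inter_iff, Set.mem_ofPred_eq, Set.mem_prod, Set.mem_preimage, Prod.map_apply,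
    Function.comp_apply, T2_eq_neg_T1, Set.mem_neg, toProd_neg, ← sub_eq_add_neg,
    dist_le_iff_toProd_sub_mem_disc h0]
  constructor
  · rintro ⟨hd, hx, hy⟩
    exact ⟨T1_subset_sector hx, by simpa [toProd_neg] using T1_subset_sector hy, hd⟩
  · rintro ⟨hx, hy, hd⟩
    have hxd := mem_disc_of_add_mem_disc hs hx hy (by rwa [← sub_eq_add_neg])
    have hyd := mem_disc_of_add_mem_disc hs hy hx (by rwa [add_comm, ← sub_eq_add_neg])
    refine ⟨hd, mem_T1_of_mem_sector_of_mem_disc hx (disc_mono h0 h1 hxd),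
      mem_T1_of_mem_sector_of_mem_disc ?_ ?_⟩
    · rwa [toProd_neg]
    · rw [toProd_neg]; exact disc_mono h0 h1 hyd

theorem volume_setOf_sub_mem_sector_mem_sector {k : ℝ} (hk : 0 < k) (z : ℝ × ℝ) :
    volume {u | z - u ∈ sector k ∧ u ∈ sector k}
      = ENNReal.ofReal z.2 * ENNReal.ofReal ((k * z.1 - z.2) / k) := by
  set P := {u | z - u ∈ sector k ∧ u ∈ sector k}
  have hP : MeasurableSet P :=
    ((measurableSet_sector k).preimage (measurable_const.sub measurable_id)).inter
      (measurableSet_sector k)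
  -- the horizontal slices at heights `t ∈ [0, z.2]` are intervals of one and the same length
  have hslice : ∀ t : ℝ, volume ((fun s => (s, t)) ⁻¹' P)
      = (Set.Icc 0 z.2).indicator (fun _ => ENNReal.ofReal ((k * z.1 - z.2) / k)) t := by
    intro t
    by_cases ht : t ∈ Set.Icc 0 z.2
    · have : (fun s => (s, t)) ⁻¹' P = Set.Icc (t / k) ((k * z.1 - z.2 + t) / k) := by
        ext s
        simp only [P, sector, Set.mem_preimage, Set.mem_ofPred_eq, Prod.fst_sub, Prod.snd_sub,
          Set.mem_Icc, div_le_iff₀ hk, le_div_iff₀ hk]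
        constructor
        · rintro ⟨⟨-, h1⟩, -, h2⟩; constructor <;> linarith
        · rintro ⟨h1, h2⟩; exact ⟨⟨by linarith [ht.2], by linarith⟩, ht.1, by linarith⟩
      rw [this, Real.volume_Icc, Set.indicator_of_mem ht]
      congr 1; field_simp; ring
    · have : (fun s => (s, t)) ⁻¹' P = ∅ :=
        Set.eq_empty_of_forall_notMem fun _ hs => ht ⟨hs.2.1, by simpa using hs.1.1⟩
      rw [Set.indicator_of_notMem ht, this, measure_empty]
  rw [Measure.volume_eq_prod, Measure.prod_apply_symm hP]
  simp_rw [hslice]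
  rw [lintegral_indicator measurableSet_Icc, setLIntegral_const, Real.volume_Icc, sub_zero,
    mul_comm]

theorem lintegral_Ioc_ofReal_pow {d : ℝ} (hd : 0 ≤ d) (n : ℕ) :
    ∫⁻ r in Set.Ioc 0 d, ENNReal.ofReal (r ^ n) = ENNReal.ofReal (d ^ (n + 1) / (n + 1)) := by
  rw [← ofReal_integral_eq_lintegral_ofReal (continuous_pow _).integrableOn_Ioc
      ((ae_restrict_mem measurableSet_Ioc).mono fun r hr => pow_nonneg hr.1.le _),
    ← intervalIntegral.integral_of_le hd, integral_pow, zero_pow n.succ_ne_zero, sub_zero]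

theorem setLIntegral_disc_of_homogeneous {f : ℝ × ℝ → ENNReal} (hf : Measurable f) {n : ℕ}
    (hhom : ∀ r : ℝ, 0 < r → ∀ z, f (r • z) = ENNReal.ofReal (r ^ n) * f z) {d : ℝ}
    (hd : 0 ≤ d) :
    ∫⁻ z in disc d, f z
      = ENNReal.ofReal (d ^ (n + 2) / (n + 2)) * ∫⁻ θ in Set.Ioo (-π) π, f (cos θ, sin θ) := by
  have hpolar : ∀ p ∈ polarCoord.target,
      ENNReal.ofReal p.1 • (disc d).indicator f (polarCoord.symm p)
        = (Set.Ioc 0 d).indicator (fun r => ENNReal.ofReal (r ^ (n + 1))) p.1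
          * f (cos p.2, sin p.2) := by
    rintro ⟨r, θ⟩ ⟨hr, -⟩
    replace hr : 0 < r := hr
    have hsymm : polarCoord.symm (r, θ) = r • (cos θ, sin θ) := by
      simp [polarCoord_symm_apply]
    have hmem : r • (cos θ, sin θ) ∈ disc d ↔ r ∈ Set.Ioc 0 d := by
      simp only [disc, Set.mem_ofPred_eq, Prod.smul_mk, smul_eq_mul, mul_pow, ← mul_add,
        cos_sq_add_sin_sq, mul_one, Set.mem_Ioc, hr, true_and]
      exact pow_le_pow_iff_left₀ hr.le hd two_ne_zero
    rw [hsymm, smul_eq_mul]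
    by_cases h : r ∈ Set.Ioc 0 d
    · rw [Set.indicator_of_mem (hmem.2 h), Set.indicator_of_mem h, hhom r hr, ← mul_assoc,
        ← ENNReal.ofReal_mul hr.le, pow_succ']
    · rw [Set.indicator_of_notMem (mt hmem.1 h), Set.indicator_of_notMem h, mul_zero, zero_mul]
  have hradial : ∫⁻ r in Set.Ioi 0,
      (Set.Ioc 0 d).indicator (fun r => ENNReal.ofReal (r ^ (n + 1))) r
        = ENNReal.ofReal (d ^ (n + 2) / (n + 2)) := by
    rw [lintegral_indicator measurableSet_Ioc, Measure.restrict_restrict measurableSet_Ioc,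
      Set.inter_eq_self_of_subset_left Set.Ioc_subset_Ioi_self, lintegral_Ioc_ofReal_pow hd]
    push_cast; ring_nf
  rw [← lintegral_indicator (measurableSet_disc d), ← lintegral_comp_polarCoord_symm,
    setLIntegral_congr_fun polarCoord.open_target.measurableSet hpolar, polarCoord_target,
    Measure.volume_eq_prod, ← Measure.prod_restrict, lintegral_prod_mul
      (f := (Set.Ioc 0 d).indicator fun r => ENNReal.ofReal (r ^ (n + 1)))
      (g := fun θ => f (cos θ, sin θ))
      ((by fun_prop : Measurable _).indicator measurableSet_Ioc).aemeasurable (by fun_prop),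
    hradial]

theorem integral_sin_mul_sqrt_three_cos_sub_sin :
    ∫ θ in (0 : ℝ)..π / 3, sin θ * ((√3 * cos θ - sin θ) / √3) = 1 / 2 - π / (6 * √3) := by
  have hs : √3 ≠ 0 := by positivity
  have hs2 : √3 ^ 2 = 3 := Real.sq_sqrt (by norm_num)
  have hexpand : (fun θ => sin θ * ((√3 * cos θ - sin θ) / √3))
      = fun θ => sin θ * cos θ - 1 / √3 * sin θ ^ 2 := by
    funext θ; field_simp
  rw [hexpand, intervalIntegral.integral_sub (by apply Continuous.intervalIntegrable; fun_prop)
      (by apply Continuous.intervalIntegrable; fun_prop),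
    intervalIntegral.integral_const_mul, integral_sin_mul_cos₁, integral_sin_sq, sin_pi_div_three,
    cos_pi_div_three, sin_zero, cos_zero]
  field_simp
  linear_combination (18 * √3) * hs2

theorem sqrt_three_mul_cos_sub_sin (θ : ℝ) : √3 * cos θ - sin θ = 2 * sin (π / 3 - θ) := by
  rw [sin_sub, sin_pi_div_three, cos_pi_div_three]; ring

theorem setLIntegral_sin_mul_sqrt_three_cos_sub_sin :
    ∫⁻ θ in Set.Ioo (-π) π, ENNReal.ofReal (sin θ) * ENNReal.ofReal ((√3 * cos θ - sin θ) / √3)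
      = ENNReal.ofReal (1 / 2 - π / (6 * √3)) := by
  have hs : 0 < √3 := by positivity
  set g : ℝ → ℝ := fun θ => sin θ * ((√3 * cos θ - sin θ) / √3)
  have hsupp : ∀ θ ∈ Set.Ioo (-π) π,
      ENNReal.ofReal (sin θ) * ENNReal.ofReal ((√3 * cos θ - sin θ) / √3)
        = (Set.Ioc 0 (π / 3)).indicator (fun θ => ENNReal.ofReal (g θ)) θ := by
    rintro θ ⟨h1, h2⟩
    by_cases h : θ ∈ Set.Ioc 0 (π / 3)
    · rw [Set.indicator_of_mem h, ← ENNReal.ofReal_mul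
        (sin_nonneg_of_nonneg_of_le_pi h.1.le (by linarith [h.2, pi_pos]))]
    · rw [Set.indicator_of_notMem h]
      rcases le_or_gt θ 0 with h0 | h0
      · rw [ENNReal.ofReal_of_nonpos (sin_nonpos_of_nonpos_of_neg_pi_le h0 h1.le), zero_mul]
      · have hθ : π / 3 < θ := lt_of_not_ge fun h' => h ⟨h0, h'⟩
        have : sin (π / 3 - θ) ≤ 0 :=
          sin_nonpos_of_nonpos_of_neg_pi_le (by linarith) (by linarith)
        rw [ENNReal.ofReal_of_nonpos (p := (√3 * cos θ - sin θ) / √3), mul_zero]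
        exact div_nonpos_of_nonpos_of_nonneg (by linarith [sqrt_three_mul_cos_sub_sin θ]) hs.le
  have hIoc : Set.Ioc 0 (π / 3) ⊆ Set.Ioo (-π) π :=
    fun θ hθ => ⟨by linarith [hθ.1, pi_pos], by linarith [hθ.2, pi_pos]⟩
  rw [setLIntegral_congr_fun measurableSet_Ioo hsupp, lintegral_indicator measurableSet_Ioc,
    Measure.restrict_restrict measurableSet_Ioc,
    Set.inter_eq_self_of_subset_left hIoc,
    ← integral_sin_mul_sqrt_three_cos_sub_sin, intervalIntegral.integral_of_le (by positivity),
    ofReal_integral_eq_lintegral_ofReal]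
  · exact (by fun_prop : Continuous g).integrableOn_Ioc
  refine (ae_restrict_mem measurableSet_Ioc).mono fun θ hθ =>
    mul_nonneg ?_ (div_nonneg ?_ hs.le)
  · exact sin_nonneg_of_nonneg_of_le_pi hθ.1.le (by linarith [hθ.2, pi_pos])
  · rw [sqrt_three_mul_cos_sub_sin]
    linarith [sin_nonneg_of_nonneg_of_le_pi (x := π / 3 - θ) (by linarith [hθ.2])
      (by linarith [hθ.1, pi_pos])]

theorem volume_setOf_mem_sector_add_mem_disc {d : ℝ} (hd : 0 ≤ d) :
    volume {q : (ℝ × ℝ) × (ℝ × ℝ) | q.1 ∈ sector √3 ∧ q.2 ∈ sector √3 ∧ q.1 + q.2 ∈ disc d}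
      = ENNReal.ofReal (d ^ 4 / 4) * ENNReal.ofReal (1 / 2 - π / (6 * √3)) := by
  have hs : 0 < √3 := by positivity
  have hhom : ∀ r : ℝ, 0 < r → ∀ z : ℝ × ℝ,
      ENNReal.ofReal (r • z).2 * ENNReal.ofReal ((√3 * (r • z).1 - (r • z).2) / √3)
        = ENNReal.ofReal (r ^ 2)
          * (ENNReal.ofReal z.2 * ENNReal.ofReal ((√3 * z.1 - z.2) / √3)) := by
    intro r hr z
    have : (√3 * (r • z).1 - (r • z).2) / √3 = r * ((√3 * z.1 - z.2) / √3) := by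
      simp only [Prod.smul_fst, Prod.smul_snd, smul_eq_mul]; ring
    rw [this, Prod.smul_snd, smul_eq_mul, ENNReal.ofReal_mul hr.le, ENNReal.ofReal_mul hr.le,
      pow_two, ENNReal.ofReal_mul hr.le]
    ring
  rw [Measure.volume_eq_prod, Measure.prod_setOf_add_mem volume volume (measurableSet_sector _)
    (measurableSet_sector _) (measurableSet_disc d)]
  simp_rw [volume_setOf_sub_mem_sector_mem_sector hs]
  rw [setLIntegral_disc_of_homogeneous (by fun_prop) hhom hd,
    setLIntegral_sin_mul_sqrt_three_cos_sub_sin]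
  norm_num

theorem volume_dist_le_inter_T1_prod_T2 {d : ℝ} (h0 : 0 ≤ d) (h1 : d ≤ √3 / 2) :
    volume ({p : EuclideanSpace ℝ (Fin 2) × EuclideanSpace ℝ (Fin 2) | dist p.1 p.2 ≤ d}
      ∩ T1 ×ˢ T2) = ENNReal.ofReal (d ^ 4 / 4) * ENNReal.ofReal (1 / 2 - π / (6 * √3)) := by
  have hK : MeasurableSet
      {q : (ℝ × ℝ) × (ℝ × ℝ) | q.1 ∈ sector √3 ∧ q.2 ∈ sector √3 ∧ q.1 + q.2 ∈ disc d} :=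
    ((measurableSet_sector _).preimage measurable_fst).inter
      (((measurableSet_sector _).preimage measurable_snd).inter
        ((measurableSet_disc d).preimage (measurable_fst.add measurable_snd)))
  have hmp : MeasurePreserving (Prod.map toProd (toProd ∘ Neg.neg)) := by
    rw [Measure.volume_eq_prod, Measure.volume_eq_prod]
    exact measurePreserving_toProd.prod
      (measurePreserving_toProd.comp (Measure.measurePreserving_neg _))
  rw [inter_T1_prod_T2_eq_preimage h0 h1, hmp.measure_preimage hK.nullMeasurableSet,
    volume_setOf_mem_sector_add_mem_disc h0]

theorem cdf_diagonal_low (d : ℝ) (h0 : 0 ≤ d) (h1 : d ≤ Real.sqrt 3 / 2) :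
    ((unifOn T1 (Real.sqrt 3 / 4)).prod (unifOn T2 (Real.sqrt 3 / 4)))
      {p : EuclideanSpace ℝ (Fin 2) × EuclideanSpace ℝ (Fin 2) | dist p.1 p.2 ≤ d}
      = ENNReal.ofReal
        (2 * (1 / 3 - Real.pi / (9 * Real.sqrt 3)) * d ^ 4) := by
  have hE : MeasurableSet
      {p : EuclideanSpace ℝ (Fin 2) × EuclideanSpace ℝ (Fin 2) | dist p.1 p.2 ≤ d} :=
    measurableSet_le (by fun_prop) measurable_const
  rw [unifOn_prod_unifOn_apply _ _ _ _ hE, volume_dist_le_inter_T1_prod_T2 h0 h1,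
    ← ENNReal.ofReal_inv_of_pos (by positivity), ← ENNReal.ofReal_mul (by positivity),
    ← ENNReal.ofReal_mul (by positivity), ← ENNReal.ofReal_mul (by positivity)]
  congr 1
  have hs2 : √3 ^ 2 = 3 := Real.sq_sqrt (by norm_num)
  field_simp
  linear_combination (72 * π * d ^ 4 - 216 * d ^ 4 * √3) * hs2
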